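/- arXiv:1909.07557 — 3 statements merged into one kernel-verified Lean document; each statement's English description precedes it below -/
import Mathlib

section
/- On a path, in any sequence of rational swaps under strict preferences, if objects o_a and o_b with a < b both end strictly to the left of their initial positions (a' < a and b' < b) and Q = [a, a'] ∩ [b, b'] is nonempty, then every agent q in Q strictly prefers o_b to o_a. -/
/-- An assignment maps agents to objects bijectively (agents and objects are both `Fin n`;
object `o_i` is identified with index `i`, agent `i` initially holds `o_i`). -/
abbrev Assignment (n : ℕ) := Equiv.Perm (Fin n)

/-- `u j o` is agent `j`'s utility for object `o`; strict linear preferences mean each `u j`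
is injective, and `o ≻_j o'` iff `u j o > u j o'`. -/
def StrictPref {n : ℕ} (u : Fin n → Fin n → ℕ) : Prop := ∀ j, Function.Injective (u j)

/-- A rational swap under strict preferences: two adjacent agents exchange objects, each
strictly preferring the object received. -/
def SwapStep {n : ℕ} (adj : Fin n → Fin n → Prop) (u : Fin n → Fin n → ℕ)
    (σ σ' : Assignment n) : Prop :=
  ∃ a b : Fin n, adj a b ∧ u a (σ b) > u a (σ a) ∧ u b (σ a) > u b (σ b) ∧
    σ' = σ * Equiv.swap a b

/-- `σseq 0, σseq 1, …, σseq t` is a sequence of swaps. -/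
def SwapSeq {n : ℕ} (adj : Fin n → Fin n → Prop) (u : Fin n → Fin n → ℕ)
    (σseq : ℕ → Assignment n) (t : ℕ) : Prop :=
  ∀ m < t, SwapStep adj u (σseq m) (σseq (m + 1))

/-- Adjacency of the path `0 – 1 – ⋯ – (n-1)`. -/
def pathAdj {n : ℕ} (i j : Fin n) : Prop := i.val + 1 = j.val ∨ j.val + 1 = i.val

/-!
Along a sequence of rational swaps, the utility an agent derives from the object it holds never
decreases. Under strict preferences an agent that holds the same object at two times therefore
holds it at every time in between, so no object ever returns to a position it has left. On a path
objects move one step at a time, hence an object that ends left of where it started moves only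
leftwards, and `o_a` stays strictly left of `o_b` throughout. When `o_b` reaches agent `q`, `o_a`
is already left of `q`, so it passed through `q` earlier: agent `q` held `o_a` before `o_b`.
-/

theorem exists_eq_of_forall_le_succ_add_one {f : ℕ → ℕ} {s₁ s₂ v : ℕ} (h₁₂ : s₁ ≤ s₂)
    (hstep : ∀ m, s₁ ≤ m → m < s₂ → f m ≤ f (m + 1) + 1) (hv₂ : f s₂ ≤ v) (hv₁ : v ≤ f s₁) :
    ∃ s, s₁ ≤ s ∧ s ≤ s₂ ∧ f s = v := by
  induction s₂, h₁₂ using Nat.le_induction with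
  | base => exact ⟨s₁, le_rfl, le_rfl, by omega⟩
  | succ k hk ih =>
    by_cases hkv : f k ≤ v
    · obtain ⟨s, hs₁, hs₂, hs⟩ := ih (fun m hm hmk => hstep m hm (by omega)) hkv
      exact ⟨s, hs₁, by omega, hs⟩
    · have := hstep k hk (by omega)
      exact ⟨k + 1, by omega, le_rfl, by omega⟩

/-- A rise at step `m` separates two times at which one level is met: the level `f (m + 1)` is
met before `m` if `f (m + 1) ≤ f 0`, and the level `f 0` after `m + 1` otherwise. -/
theorem succ_le_of_levels_ordConnected {f : ℕ → ℕ} {t : ℕ}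
    (hstep : ∀ m < t, f m ≤ f (m + 1) + 1)
    (hlevel : ∀ s₁ s s₂, s₁ ≤ s → s ≤ s₂ → s₂ ≤ t → f s₁ = f s₂ → f s = f s₁)
    (hend : f t < f 0) {m : ℕ} (hm : m < t) : f (m + 1) ≤ f m := by
  by_contra! hup
  rcases le_or_gt (f (m + 1)) (f 0) with hle | hgt
  · obtain ⟨s, -, hsm, hs⟩ := exists_eq_of_forall_le_succ_add_one (Nat.zero_le m)
      (fun k _ hk => hstep k (by omega)) hup.le hle
    have := hlevel s m (m + 1) hsm (Nat.le_succ m) hm hs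
    omega
  · obtain ⟨s, hms, hst, hs⟩ := exists_eq_of_forall_le_succ_add_one hm
      (fun k _ hk => hstep k hk) hend.le hgt.le
    have h₁ := hlevel 0 m s (Nat.zero_le m) (by omega) hst hs.symm
    have h₂ := hlevel 0 (m + 1) s (Nat.zero_le _) hms hst hs.symm
    omega

namespace SwapStep

variable {n : ℕ} {adj : Fin n → Fin n → Prop} {u : Fin n → Fin n → ℕ} {σ σ' : Assignment n}

theorem utility_le (h : SwapStep adj u σ σ') (w : Fin n) : u w (σ w) ≤ u w (σ' w) := by
  obtain ⟨x, y, -, hx, hy, rfl⟩ := h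
  rw [Equiv.Perm.mul_apply, Equiv.swap_apply_def]
  split_ifs with hwx hwy
  · rw [hwx]; exact hx.le
  · rw [hwy]; exact hy.le
  · exact le_rfl

theorem position_le_add_one (h : SwapStep pathAdj u σ σ') (o : Fin n) :
    ((σ⁻¹ o : Fin n) : ℕ) ≤ (σ'⁻¹ o : Fin n) + 1 := by
  obtain ⟨x, y, hxy, -, -, rfl⟩ := h
  rw [mul_inv_rev, Equiv.swap_inv, Equiv.Perm.mul_apply, Equiv.swap_apply_def]
  unfold pathAdj at hxy
  split_ifs with hx hy
  · rw [hx]; omega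
  · rw [hy]; omega
  · exact Nat.le_succ _

end SwapStep

namespace SwapSeq

variable {n : ℕ} {adj : Fin n → Fin n → Prop} {u : Fin n → Fin n → ℕ}
  {σseq : ℕ → Assignment n} {t : ℕ}

theorem utility_mono (h : SwapSeq adj u σseq t) (w : Fin n) {s₁ s₂ : ℕ} (h₁₂ : s₁ ≤ s₂)
    (h₂ : s₂ ≤ t) : u w (σseq s₁ w) ≤ u w (σseq s₂ w) := by
  induction s₂, h₁₂ using Nat.le_induction with
  | base => exact le_rfl
  | succ k _ ih => exact (ih (by omega)).trans ((h k (by omega)).utility_le w)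

theorem apply_eq_of_le_of_le (hu : StrictPref u) (h : SwapSeq adj u σseq t) {w o : Fin n}
    {s₁ s s₂ : ℕ} (h₁ : s₁ ≤ s) (h₂ : s ≤ s₂) (ht : s₂ ≤ t) (hs₁ : σseq s₁ w = o)
    (hs₂ : σseq s₂ w = o) : σseq s w = o :=
  hu w <| le_antisymm (hs₂ ▸ h.utility_mono w h₂ ht) (hs₁ ▸ h.utility_mono w h₁ (h₂.trans ht))

theorem position_succ_le (hu : StrictPref u) (h : SwapSeq pathAdj u σseq t) {o : Fin n}
    (hend : ((σseq t)⁻¹ o : ℕ) < ((σseq 0)⁻¹ o : Fin n)) {m : ℕ} (hm : m < t) :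
    ((σseq (m + 1))⁻¹ o : ℕ) ≤ ((σseq m)⁻¹ o : Fin n) := by
  refine succ_le_of_levels_ordConnected (f := fun s => ((σseq s)⁻¹ o : ℕ))
    (fun k hk => (h k hk).position_le_add_one o) ?_ hend hm
  intro s₁ s s₂ h₁ h₂ ht heq
  have hs₁ : σseq s₁ ((σseq s₁)⁻¹ o) = o := Equiv.apply_symm_apply _ _
  have hs₂ : σseq s₂ ((σseq s₁)⁻¹ o) = o := by
    rw [Fin.val_injective heq]; exact Equiv.apply_symm_apply _ _
  rw [Equiv.Perm.inv_eq_iff_eq.mpr (h.apply_eq_of_le_of_le hu h₁ h₂ ht hs₁ hs₂).symm]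

theorem position_lt_position (hu : StrictPref u) (h : SwapSeq pathAdj u σseq t) {o o' : Fin n}
    (hne : o ≠ o') (hend : ((σseq t)⁻¹ o : ℕ) < ((σseq 0)⁻¹ o : Fin n))
    (h0 : ((σseq 0)⁻¹ o : ℕ) < ((σseq 0)⁻¹ o' : Fin n)) {s : ℕ} (hs : s ≤ t) :
    ((σseq s)⁻¹ o : ℕ) < ((σseq s)⁻¹ o' : Fin n) := by
  induction s with
  | zero => exact h0
  | succ k ih =>
    have ho := h.position_succ_le hu hend (m := k) (by omega)
    have ho' := (h k (by omega)).position_le_add_one o'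
    have hne' : ((σseq (k + 1))⁻¹ o : ℕ) ≠ ((σseq (k + 1))⁻¹ o' : Fin n) :=
      Fin.val_injective.ne ((σseq (k + 1))⁻¹.injective.ne hne)
    have := ih (by omega)
    omega

theorem exists_apply_eq (h : SwapSeq pathAdj u σseq t) {o q : Fin n} {s₁ s₂ : ℕ}
    (h₁₂ : s₁ ≤ s₂) (ht : s₂ ≤ t) (hq₂ : ((σseq s₂)⁻¹ o : ℕ) ≤ q)
    (hq₁ : (q : ℕ) ≤ ((σseq s₁)⁻¹ o : Fin n)) : ∃ s, s₁ ≤ s ∧ s ≤ s₂ ∧ σseq s q = o := by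
  obtain ⟨s, hs₁, hs₂, hs⟩ := exists_eq_of_forall_le_succ_add_one
    (f := fun s => ((σseq s)⁻¹ o : ℕ)) h₁₂
    (fun m _ hm => (h m (by omega)).position_le_add_one o) hq₂ hq₁
  exact ⟨s, hs₁, hs₂, (Equiv.Perm.inv_eq_iff_eq.mp (Fin.val_injective hs)).symm⟩

end SwapSeq

theorem intersect_both_left_general {n : ℕ}
    (u : Fin n → Fin n → ℕ) (hu : StrictPref u)
    (t : ℕ) (σseq : ℕ → Assignment n) (h0 : σseq 0 = 1)
    (hseq : SwapSeq pathAdj u σseq t)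
    (a b : Fin n) (hab : a.val < b.val)
    (ha : (((σseq t)⁻¹) a).val < a.val) :
    ∀ q : Fin n,
      q.val ∈ Set.Icc (((σseq t)⁻¹) a).val a.val ∩ Set.Icc (((σseq t)⁻¹) b).val b.val →
      u q b > u q a := by
  rintro q ⟨⟨hqa', hqa⟩, hqb', hqb⟩
  have hinit : ∀ o, (σseq 0)⁻¹ o = o := by simp [h0]
  have hne : a ≠ b := Fin.ne_of_lt hab
  obtain ⟨sb, -, hsb, hbq⟩ := hseq.exists_apply_eq (Nat.zero_le t) le_rfl hqb' (by rwa [hinit])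
  have hlt := hseq.position_lt_position hu hne (by rwa [hinit]) (by rwa [hinit, hinit]) hsb
  rw [Equiv.Perm.inv_eq_iff_eq.mpr hbq.symm] at hlt
  obtain ⟨sa, -, hsa, haq⟩ := hseq.exists_apply_eq (Nat.zero_le sb) hsb hlt.le (by rwa [hinit])
  have hle : u q a ≤ u q b := haq ▸ hbq ▸ hseq.utility_mono q hsa hsb
  exact lt_of_le_of_ne hle fun h => hne (hu q h)

/-- on a path, if `a < b`, both objects end strictly to the left of their
initial positions (`a' < a`, `b' < b`), and `Q = [a,a'] ∩ [b,b']` is nonempty, then every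
agent `q ∈ Q` strictly prefers `o_b` to `o_a`. -/
theorem intersect_both_left {n : ℕ}
    (u : Fin n → Fin n → ℕ) (hu : StrictPref u)
    (t : ℕ) (σseq : ℕ → Assignment n) (h0 : σseq 0 = 1)
    (hseq : SwapSeq pathAdj u σseq t)
    (a b : Fin n) (hab : a.val < b.val)
    (ha : (((σseq t)⁻¹) a).val < a.val) (hb : (((σseq t)⁻¹) b).val < b.val)
    (hQ : (Set.Icc (((σseq t)⁻¹) a).val a.val ∩
            Set.Icc (((σseq t)⁻¹) b).val b.val).Nonempty) :
    ∀ q : Fin n,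
      q.val ∈ Set.Icc (((σseq t)⁻¹) a).val a.val ∩ Set.Icc (((σseq t)⁻¹) b).val b.val →
      u q b > u q a :=
  intersect_both_left_general u hu t σseq h0 hseq a b hab ha
end

section
/- On a path with n' agents, consider a sequence of rational swaps under strict preferences in which the final assignment σ_t satisfies σ_t^T(o_1) = k and σ_t^T(o_{n'}) = k-1. For objects o_a, o_b with a < b, a' = σ_t^T(o_a) > a, b' = σ_t^T(o_b) < b, and [a,a'] ∩ [b,b'] ≠ ∅, there is a swap exchanging o_a and o_b occurring between agents c-1 and c where c = a' + b' - k + 1, and moreover c lies in [a+1, a'] ∩ [b', b]. -/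
/-!
Every agent's utility only increases along the sequence, so an object never comes back to an
agent it has left; as objects move one agent per step, every trajectory is monotone. An object
that weakly moves right is never overtaken from the left, since their distance changes by at most
one per step and never vanishes (and symmetrically for left-movers). Because `o_1` ends at `k`
and `o_{n'}` at `k - 1`, the right-movers are exactly the objects ending at `≥ k` and the
left-movers those ending at `< k`, and both classes keep their initial order.

The right-mover `o_a` and the left-mover `o_b` must swap at some step, at agents `p, p + 1`.
The objects left of agent `p` at that moment are the right-movers starting left of `o_a`
(`a' - k` of them) and the left-movers starting left of `o_b` (`b'` of them), so `p = a' + b' - k`.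
-/

open Finset

theorem Nat.exists_eq_of_mem_uIcc_of_step_le_one {f : ℕ → ℕ} {s₁ s₂ : ℕ} (hs : s₁ ≤ s₂)
    (hf : ∀ s ∈ Set.Ico s₁ s₂, f (s + 1) ≤ f s + 1 ∧ f s ≤ f (s + 1) + 1)
    {v : ℕ} (hv : v ∈ Set.uIcc (f s₁) (f s₂)) : ∃ r ∈ Set.Icc s₁ s₂, f r = v := by
  induction s₂, hs using Nat.le_induction generalizing v with
  | base => exact ⟨s₁, ⟨le_rfl, le_rfl⟩, (by simpa using hv : v = f s₁).symm⟩
  | succ m hm ih =>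
    have hstep := hf m ⟨hm, m.lt_succ_self⟩
    by_cases hvm : v ∈ Set.uIcc (f s₁) (f m)
    · obtain ⟨r, ⟨hr₁, hr₂⟩, hr⟩ := ih (fun s hs => hf s ⟨hs.1, hs.2.trans m.lt_succ_self⟩) hvm
      exact ⟨r, ⟨hr₁, hr₂.trans (Nat.le_add_right m 1)⟩, hr⟩
    · simp only [Set.mem_uIcc] at hv hvm
      exact ⟨m + 1, ⟨hm.trans (Nat.le_add_right m 1), le_rfl⟩, by omega⟩

theorem Nat.lt_of_lt_of_ne_of_step {f g : ℕ → ℕ} {t : ℕ} (h₀ : f 0 < g 0)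
    (hne : ∀ s ≤ t, f s ≠ g s) (hstep : ∀ s < t, f (s + 1) + g s ≤ f s + g (s + 1) + 1) :
    ∀ s ≤ t, f s < g s := by
  intro s hs
  induction s with
  | zero => exact h₀
  | succ s ih =>
    have := ih (by omega)
    have := hstep s hs
    have := hne (s + 1) hs
    omega

theorem Finset.card_filter_or_of_disjoint {α : Type*} [DecidableEq α] (s : Finset α)
    {p q : α → Prop} [DecidablePred p] [DecidablePred q] (h : ∀ x, p x → ¬q x) :
    #(s.filter fun x => p x ∨ q x) = #(s.filter p) + #(s.filter q) := by
  rw [filter_or, card_union_of_disjoint (disjoint_filter.2 fun x _ => h x)]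

section

variable {n : ℕ} {u : Fin n → Fin n → ℕ} {σseq : ℕ → Assignment n} {t : ℕ}

/-- The agent `σ_s^T(x)` holding object `x` at time `s`. -/
def holder (σseq : ℕ → Assignment n) (x : Fin n) (s : ℕ) : ℕ := ((σseq s)⁻¹ x).val

theorem holder_zero (h0 : σseq 0 = 1) (x : Fin n) : holder σseq x 0 = x := by
  simp [holder, h0]

theorem holder_lt (σseq : ℕ → Assignment n) (x : Fin n) (s : ℕ) : holder σseq x s < n :=
  ((σseq s)⁻¹ x).isLt

theorem holder_injective (s : ℕ) : Function.Injective (holder σseq · s) :=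
  fun _ _ h => (σseq s)⁻¹.injective (Fin.ext h)

theorem card_holder_lt (σseq : ℕ → Assignment n) (s : ℕ) {v : ℕ} (hv : v ≤ n) :
    #{x | holder σseq x s < v} = v := by
  calc #{x | holder σseq x s < v} = #{i : Fin n | (i : ℕ) < v} :=
        card_equiv (σseq s)⁻¹ fun i => by simp only [mem_filter, mem_univ, true_and]; rfl
    _ = v := by rw [Fin.card_filter_val_lt, min_eq_right hv]

namespace SwapSeq

theorem utility_monotoneOn {adj : Fin n → Fin n → Prop} (hseq : SwapSeq adj u σseq t)
    (j : Fin n) : MonotoneOn (fun s => u j (σseq s j)) (Set.Iic t) := by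
  refine monotoneOn_of_le_succ Set.ordConnected_Iic fun s _ _ hs => ?_
  rw [Order.succ_eq_add_one] at hs ⊢
  obtain ⟨a, b, -, ha, hb, hstep⟩ := hseq s (by simpa using hs)
  simp only [hstep, Equiv.Perm.mul_apply, Equiv.swap_apply_def]
  split_ifs with h₁ h₂ <;> subst_vars <;> omega

theorem apply_eq_of_apply_eq {adj : Fin n → Fin n → Prop} (hu : StrictPref u)
    (hseq : SwapSeq adj u σseq t) (j : Fin n) {s₁ s₂ s₃ : ℕ} (h₁₂ : s₁ ≤ s₂) (h₂₃ : s₂ ≤ s₃)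
    (h₃ : s₃ ≤ t) (h : σseq s₁ j = σseq s₃ j) : σseq s₂ j = σseq s₁ j := by
  have hmono := hseq.utility_monotoneOn j
  have hle₁ := hmono (h₁₂.trans (h₂₃.trans h₃)) (h₂₃.trans h₃) h₁₂
  have hle₂ := hmono (h₂₃.trans h₃) h₃ h₂₃
  exact hu j (le_antisymm (h ▸ hle₂) hle₁)

theorem holder_eq_of_holder_eq {adj : Fin n → Fin n → Prop} (hu : StrictPref u)
    (hseq : SwapSeq adj u σseq t) (x : Fin n) {s₁ s₂ s₃ : ℕ} (h₁₂ : s₁ ≤ s₂) (h₂₃ : s₂ ≤ s₃)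
    (h₃ : s₃ ≤ t) (h : holder σseq x s₁ = holder σseq x s₃) :
    holder σseq x s₂ = holder σseq x s₁ := by
  set j := (σseq s₁)⁻¹ x
  have hj₁ : σseq s₁ j = x := Equiv.Perm.eq_inv_iff_eq.mp rfl
  have hj₃ : σseq s₃ j = x := Equiv.Perm.eq_inv_iff_eq.mp (Fin.ext h)
  have hj₂ := hseq.apply_eq_of_apply_eq hu j h₁₂ h₂₃ h₃ (hj₁.trans hj₃.symm)
  exact congrArg Fin.val (Equiv.Perm.eq_inv_iff_eq.mpr (hj₂.trans hj₁)).symm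

theorem holder_succ_le_and_le_succ (hseq : SwapSeq pathAdj u σseq t) {m : ℕ} (hm : m < t)
    (x : Fin n) :
    holder σseq x (m + 1) ≤ holder σseq x m + 1 ∧ holder σseq x m ≤ holder σseq x (m + 1) + 1 := by
  obtain ⟨i, j, hij, -, -, hstep⟩ := hseq m hm
  have hx : (σseq (m + 1))⁻¹ x = Equiv.swap i j ((σseq m)⁻¹ x) := by
    rw [hstep, mul_inv_rev, Equiv.swap_inv]; rfl
  simp only [holder, hx, Equiv.swap_apply_def]
  unfold pathAdj at hij
  split_ifs <;> simp only [Fin.ext_iff] at * <;> omega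

theorem holder_mem_uIcc (hu : StrictPref u) (hseq : SwapSeq pathAdj u σseq t) (x : Fin n)
    {s₁ s₂ s₃ : ℕ} (h₁₂ : s₁ ≤ s₂) (h₂₃ : s₂ ≤ s₃) (h₃ : s₃ ≤ t) :
    holder σseq x s₂ ∈ Set.uIcc (holder σseq x s₁) (holder σseq x s₃) := by
  set f := holder σseq x
  have hstep : ∀ s ∈ Set.Ico s₁ s₃, f (s + 1) ≤ f s + 1 ∧ f s ≤ f (s + 1) + 1 :=
    fun s hs => hseq.holder_succ_le_and_le_succ (hs.2.trans_le h₃) x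
  by_contra hout
  -- otherwise a neighbour `v` of agent `f s₂` holds `x` both before and after time `s₂`
  obtain ⟨v, hv₁, hv₃, hv₂⟩ : ∃ v, v ∈ Set.uIcc (f s₁) (f s₂) ∧ v ∈ Set.uIcc (f s₂) (f s₃) ∧
      v ≠ f s₂ := by
    simp only [Set.mem_uIcc] at hout ⊢
    by_cases hlt : f s₂ < f s₁
    · exact ⟨f s₂ + 1, by omega⟩
    · exact ⟨f s₂ - 1, by omega⟩
  obtain ⟨r₁, ⟨-, hr₁⟩, hfr₁⟩ := Nat.exists_eq_of_mem_uIcc_of_step_le_one h₁₂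
    (fun s hs => hstep s ⟨hs.1, hs.2.trans_le h₂₃⟩) hv₁
  obtain ⟨r₃, ⟨hr₃, hr₃s₃⟩, hfr₃⟩ := Nat.exists_eq_of_mem_uIcc_of_step_le_one h₂₃
    (fun s hs => hstep s ⟨h₁₂.trans hs.1, hs.2⟩) hv₃
  have := hseq.holder_eq_of_holder_eq hu x hr₁ hr₃ (hr₃s₃.trans h₃) (hfr₁.trans hfr₃.symm)
  exact hv₂ (hfr₁ ▸ this.symm)

theorem holder_monotoneOn (hu : StrictPref u) (hseq : SwapSeq pathAdj u σseq t) {x : Fin n}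
    (hx : holder σseq x 0 ≤ holder σseq x t) : MonotoneOn (holder σseq x) (Set.Iic t) := by
  intro s hs s' hs' hss'
  have h₁ := hseq.holder_mem_uIcc hu x (Nat.zero_le s) hs le_rfl
  have h₂ := hseq.holder_mem_uIcc hu x hss' hs' le_rfl
  simp only [Set.mem_uIcc] at h₁ h₂
  omega

theorem holder_antitoneOn (hu : StrictPref u) (hseq : SwapSeq pathAdj u σseq t) {x : Fin n}
    (hx : holder σseq x t ≤ holder σseq x 0) : AntitoneOn (holder σseq x) (Set.Iic t) := by
  intro s hs s' hs' hss'
  have h₁ := hseq.holder_mem_uIcc hu x (Nat.zero_le s) hs le_rfl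
  have h₂ := hseq.holder_mem_uIcc hu x hss' hs' le_rfl
  simp only [Set.mem_uIcc] at h₁ h₂
  omega

theorem holder_lt_holder_of_monotoneOn (hseq : SwapSeq pathAdj u σseq t) {z w : Fin n}
    (hw : MonotoneOn (holder σseq w) (Set.Iic t))
    (hzw : holder σseq z 0 < holder σseq w 0) {s : ℕ} (hs : s ≤ t) :
    holder σseq z s < holder σseq w s := by
  refine Nat.lt_of_lt_of_ne_of_step hzw (fun s _ => (holder_injective s).ne ?_)
    (fun s hs => ?_) s hs
  · rintro rfl; exact hzw.ne rfl
  · have := (hseq.holder_succ_le_and_le_succ hs z).1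
    have : holder σseq w s ≤ holder σseq w (s + 1) :=
      hw hs.le hs (Nat.le_add_right s 1)
    omega

theorem holder_lt_holder_of_antitoneOn (hseq : SwapSeq pathAdj u σseq t) {z w : Fin n}
    (hz : AntitoneOn (holder σseq z) (Set.Iic t))
    (hzw : holder σseq z 0 < holder σseq w 0) {s : ℕ} (hs : s ≤ t) :
    holder σseq z s < holder σseq w s := by
  refine Nat.lt_of_lt_of_ne_of_step hzw (fun s _ => (holder_injective s).ne ?_)
    (fun s hs => ?_) s hs
  · rintro rfl; exact hzw.ne rfl
  · have := (hseq.holder_succ_le_and_le_succ hs w).2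
    have : holder σseq z (s + 1) ≤ holder σseq z s :=
      hz hs.le hs (Nat.le_add_right s 1)
    omega

theorem exists_swap_of_monotoneOn_of_antitoneOn (hseq : SwapSeq pathAdj u σseq t) {a b : Fin n}
    (ha : MonotoneOn (holder σseq a) (Set.Iic t)) (hb : AntitoneOn (holder σseq b) (Set.Iic t))
    (h₀ : holder σseq a 0 < holder σseq b 0) (ht : holder σseq b t < holder σseq a t) :
    ∃ m < t, holder σseq b m = holder σseq a m + 1 ∧ holder σseq a (m + 1) = holder σseq b m ∧
      holder σseq b (m + 1) = holder σseq a m := by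
  obtain ⟨m, hbefore, hmt, hafter⟩ := Nat.exists_not_and_succ_of_not_zero_of_exists
    (p := fun s => s ≤ t ∧ holder σseq b s < holder σseq a s) (by omega) ⟨t, le_rfl, ht⟩
  have hne := (holder_injective (σseq := σseq) m).ne (show a ≠ b by rintro rfl; omega)
  have := (hseq.holder_succ_le_and_le_succ hmt a).1
  have := (hseq.holder_succ_le_and_le_succ hmt b).2
  have : holder σseq a m ≤ holder σseq a (m + 1) :=
    ha ((Nat.le_add_right m 1).trans hmt) hmt (Nat.le_add_right m 1)
  have : holder σseq b (m + 1) ≤ holder σseq b m :=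
    hb ((Nat.le_add_right m 1).trans hmt) hmt (Nat.le_add_right m 1)
  exact ⟨m, hmt, by omega⟩

end SwapSeq

theorem k_le_holder_of_le (hu : StrictPref u) (h0 : σseq 0 = 1)
    (hseq : SwapSeq pathAdj u σseq t) {z₀ : Fin n} (hz₀ : (z₀ : ℕ) = 0) {k : ℕ}
    (hK : holder σseq z₀ t = k) {z : Fin n} (hz : (z : ℕ) ≤ holder σseq z t) :
    k ≤ holder σseq z t := by
  rcases eq_or_ne z z₀ with rfl | hzz₀
  · exact hK.ge
  have hz₀z : holder σseq z₀ 0 < holder σseq z 0 := by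
    rw [holder_zero h0, holder_zero h0, hz₀]
    exact Nat.pos_of_ne_zero fun h => hzz₀ (Fin.ext (h.trans hz₀.symm))
  have hmono := hseq.holder_monotoneOn hu (x := z) (by rwa [holder_zero h0])
  exact hK ▸ (hseq.holder_lt_holder_of_monotoneOn hmono hz₀z le_rfl).le

theorem holder_lt_of_le (hu : StrictPref u) (h0 : σseq 0 = 1)
    (hseq : SwapSeq pathAdj u σseq t) {z₁ : Fin n} (hz₁ : (z₁ : ℕ) = n - 1) {k : ℕ}
    (hk1 : 1 ≤ k) (hK1 : holder σseq z₁ t = k - 1) {z : Fin n} (hz : holder σseq z t ≤ z) :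
    holder σseq z t < k := by
  rcases eq_or_ne z z₁ with rfl | hzz₁
  · omega
  have hzz₁' : holder σseq z 0 < holder σseq z₁ 0 := by
    rw [holder_zero h0, holder_zero h0, hz₁]
    have := z.isLt
    exact lt_of_le_of_ne (by omega) fun h => hzz₁ (Fin.ext (h.trans hz₁.symm))
  have hanti := hseq.holder_antitoneOn hu (x := z) (by rwa [holder_zero h0])
  have := hseq.holder_lt_holder_of_antitoneOn hanti hzz₁' le_rfl
  omega

theorem strictMonoOn_holder_of_k_le (hu : StrictPref u) (h0 : σseq 0 = 1)
    (hseq : SwapSeq pathAdj u σseq t) {z₁ : Fin n} (hz₁ : (z₁ : ℕ) = n - 1) {k : ℕ}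
    (hk1 : 1 ≤ k) (hK1 : holder σseq z₁ t = k - 1) {s : ℕ} (hs : s ≤ t) :
    StrictMonoOn (holder σseq · s) {z | k ≤ holder σseq z t} := by
  intro z _ w hw hzw
  have hw' : (w : ℕ) ≤ holder σseq w t := by
    by_contra! h
    exact (holder_lt_of_le hu h0 hseq hz₁ hk1 hK1 h.le).not_ge hw
  have hmono := hseq.holder_monotoneOn hu (x := w) (by rwa [holder_zero h0])
  exact hseq.holder_lt_holder_of_monotoneOn hmono (by rwa [holder_zero h0, holder_zero h0]) hs

theorem strictMonoOn_holder_of_lt_k (hu : StrictPref u) (h0 : σseq 0 = 1)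
    (hseq : SwapSeq pathAdj u σseq t) {z₀ : Fin n} (hz₀ : (z₀ : ℕ) = 0) {k : ℕ}
    (hK : holder σseq z₀ t = k) {s : ℕ} (hs : s ≤ t) :
    StrictMonoOn (holder σseq · s) {z | holder σseq z t < k} := by
  intro z hz w _ hzw
  have hz' : holder σseq z t ≤ z := by
    by_contra! h
    exact (k_le_holder_of_le hu h0 hseq hz₀ hK h.le).not_gt hz
  have hanti := hseq.holder_antitoneOn hu (x := z) (by rwa [holder_zero h0])
  exact hseq.holder_lt_holder_of_antitoneOn hanti (by rwa [holder_zero h0, holder_zero h0]) hs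

theorem holder_add_eq_of_adjacent (hu : StrictPref u) (h0 : σseq 0 = 1)
    (hseq : SwapSeq pathAdj u σseq t) {z₀ z₁ : Fin n} (hz₀ : (z₀ : ℕ) = 0)
    (hz₁ : (z₁ : ℕ) = n - 1) {k : ℕ} (hk1 : 1 ≤ k) (hK : holder σseq z₀ t = k)
    (hK1 : holder σseq z₁ t = k - 1) {a b : Fin n} {m : ℕ} (hm : m ≤ t)
    (ha : k ≤ holder σseq a t) (hb : holder σseq b t < k)
    (hab : holder σseq b m = holder σseq a m + 1) :
    holder σseq a m + k = holder σseq a t + holder σseq b t := by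
  have hR {s} (hs : s ≤ t) := strictMonoOn_holder_of_k_le hu h0 hseq hz₁ hk1 hK1 hs
  have hL {s} (hs : s ≤ t) := strictMonoOn_holder_of_lt_k hu h0 hseq hz₀ hK hs
  -- left of `a` at time `m`: the right-movers starting left of `a`, the left-movers left of `b`
  have hsplit : ∀ z ∈ univ, holder σseq z m < holder σseq a m ↔
      (k ≤ holder σseq z t ∧ holder σseq z t < holder σseq a t) ∨
        holder σseq z t < holder σseq b t := by
    intro z _
    by_cases hz : k ≤ holder σseq z t
    · rw [(hR hm).lt_iff_lt hz ha, ← (hR le_rfl).lt_iff_lt hz ha]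
      omega
    · rw [not_le] at hz
      have hza : holder σseq z m ≠ holder σseq a m :=
        (holder_injective m).ne (by rintro rfl; omega)
      have := ((hL hm).lt_iff_lt hz hb).trans ((hL le_rfl).lt_iff_lt hz hb).symm
      omega
  have hfinal : ∀ z ∈ univ, holder σseq z t < holder σseq a t ↔
      (k ≤ holder σseq z t ∧ holder σseq z t < holder σseq a t) ∨ holder σseq z t < k := by
    intro z _
    omega
  have hm_count := card_holder_lt σseq m (holder_lt σseq a m).le
  have ht_count := card_holder_lt σseq t (holder_lt σseq a t).le
  rw [filter_congr hsplit, card_filter_or_of_disjoint _ (fun z hz => by omega),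
    card_holder_lt σseq t (holder_lt σseq b t).le] at hm_count
  rw [filter_congr hfinal, card_filter_or_of_disjoint _ (fun z hz => by omega),
    card_holder_lt σseq t (hK ▸ holder_lt σseq z₀ t).le] at ht_count
  omega

end

/-- 0-indexed agents/objects: object `o_1` is index `0`, object `o_{n'}` is index
`n-1`, and the paper's `c = a'+b'-k+1` in 1-indexed positions equals `a'+b'+1-k` in 0-indexed
positions: on a path of `n` agents, in a sequence of rational swaps whose final assignment
sends `o_1` to agent `k` and `o_{n'}` to agent `k-1`, for objects `o_a, o_b` with `a < b`,
`a' > a`, `b' < b` and `[a,a'] ∩ [b',b] ≠ ∅`, there is a swap exchanging `o_a` and `o_b`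
between agents `c-1` and `c` where `c = a'+b'+1-k`, and `c ∈ [a+1,a'] ∩ [b',b]`. -/
theorem crossing_swap_position {n : ℕ} (hn : 0 < n)
    (u : Fin n → Fin n → ℕ) (hu : StrictPref u)
    (t : ℕ) (σseq : ℕ → Assignment n) (h0 : σseq 0 = 1)
    (hseq : SwapSeq pathAdj u σseq t)
    (k : ℕ) (hk1 : 1 ≤ k)
    (hK : (((σseq t)⁻¹) ⟨0, hn⟩).val = k)
    (hK1 : (((σseq t)⁻¹) ⟨n - 1, by omega⟩).val = k - 1)
    (a b : Fin n) (hab : a.val < b.val)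
    (ha : a.val < (((σseq t)⁻¹) a).val) (hb : (((σseq t)⁻¹) b).val < b.val) :
    let a' : ℕ := (((σseq t)⁻¹) a).val
    let b' : ℕ := (((σseq t)⁻¹) b).val
    let c : ℤ := (a' : ℤ) + b' + 1 - k
    ((a.val : ℤ) + 1 ≤ c ∧ c ≤ (a' : ℤ) ∧ (b' : ℤ) ≤ c ∧ c ≤ (b.val : ℤ)) ∧
    ∃ m < t, ((((σseq m)⁻¹) a).val : ℤ) = c - 1 ∧ ((((σseq m)⁻¹) b).val : ℤ) = c ∧
      ((((σseq (m + 1))⁻¹) a).val : ℤ) = c ∧ ((((σseq (m + 1))⁻¹) b).val : ℤ) = c - 1 := by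
  dsimp only
  have hka := k_le_holder_of_le hu h0 hseq rfl hK ha.le
  have hbk := holder_lt_of_le hu h0 hseq rfl hk1 hK1 hb.le
  have hmono := hseq.holder_monotoneOn hu (x := a) (by rw [holder_zero h0]; exact ha.le)
  have hanti := hseq.holder_antitoneOn hu (x := b) (by rw [holder_zero h0]; exact hb.le)
  obtain ⟨m, hmt, hbm, ham, hbm'⟩ := hseq.exists_swap_of_monotoneOn_of_antitoneOn hmono hanti
    (by simpa only [holder_zero h0]) (by omega)
  have hcount := holder_add_eq_of_adjacent hu h0 hseq rfl rfl hk1 hK hK1 hmt.le hka hbk hbm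
  have ha₀ := hmono (Nat.zero_le t) hmt.le (Nat.zero_le m)
  have ha₁ : holder σseq a (m + 1) ≤ holder σseq a t := hmono hmt (le_refl t) hmt
  have hb₀ := hanti (Nat.zero_le t) hmt.le (Nat.zero_le m)
  have hb₁ := hanti hmt.le (le_refl t) hmt.le
  rw [holder_zero h0] at ha₀ hb₀
  unfold holder at *
  exact ⟨by omega, m, hmt, by omega⟩
end

section
/- If there is a reachable assignment σ (via rational swaps on a path) with σ(k) = o_1 and σ(k-1) = o_{n'}, then n' ≥ k. -/
/-- `σ` is reachable from the identity endowment via rational swaps. -/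
def ReachableAssign {n : ℕ} (adj : Fin n → Fin n → Prop) (u : Fin n → Fin n → ℕ)
    (σ : Assignment n) : Prop :=
  ∃ t σseq, σseq 0 = 1 ∧ SwapSeq adj u σseq t ∧ σseq t = σ

/-! A rational swap strictly improves both participants, so an agent who holds the same object
at two times holds it throughout: an object never returns to an agent it has left. On a path an
object moves by one agent per swap, so an object that ends no further left than it started never
moves left. If `y := σ (k-1)` had `y < k`, then `y`, travelling from agent `y` to agent `k-1`,
would only move right, while `o_1` starts at agent `0`, strictly left of `y`, advances at most
one agent per swap and never sits where `y` sits; so `o_1` stays left of `y`, contradicting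
`σ k = o_1`. -/

section NatSequences

theorem exists_eq_of_le_succ_of_le_of_le (f : ℕ → ℕ) {s t v : ℕ} (hst : s ≤ t)
    (hstep : ∀ m < t, f (m + 1) ≤ f m + 1) (hs : f s ≤ v) (ht : v ≤ f t) :
    ∃ m, s ≤ m ∧ m ≤ t ∧ f m = v := by
  induction t, hst using Nat.le_induction with
  | base => exact ⟨s, le_rfl, le_rfl, by omega⟩
  | succ t hst ih =>
    by_cases hv : v ≤ f t
    · obtain ⟨m, hsm, hmt, hm⟩ := ih (fun m hm => hstep m (by omega)) hv
      exact ⟨m, hsm, by omega, hm⟩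
    · exact ⟨t + 1, by omega, le_rfl, by have := hstep t (by omega); omega⟩

theorem le_succ_of_no_return (f : ℕ → ℕ) (T : ℕ) (hstep : ∀ m < T, f (m + 1) ≤ f m + 1)
    (hreturn : ∀ t s t', t ≤ s → s ≤ t' → t' ≤ T → f t = f t' → f s = f t)
    (hend : f 0 ≤ f T) : ∀ t < T, f t ≤ f (t + 1) := by
  intro t ht
  by_contra! hdrop
  by_cases hstart : f 0 ≤ f (t + 1)
  · obtain ⟨m, -, hmt, hm⟩ := exists_eq_of_le_succ_of_le_of_le f (Nat.zero_le t)
      (fun m hm => hstep m (by omega)) hstart hdrop.le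
    have := hreturn m t (t + 1) hmt (by omega) (by omega) hm
    omega
  · obtain ⟨m, htm, hmT, hm⟩ := exists_eq_of_le_succ_of_le_of_le f (show t + 1 ≤ T by omega)
      (fun m hm => hstep m hm) (by omega) hend
    have := hreturn 0 (t + 1) m (Nat.zero_le _) htm hmT hm.symm
    omega

theorem lt_of_forall_ne_of_le_succ (p q : ℕ → ℕ) (T : ℕ) (h0 : p 0 < q 0)
    (hp : ∀ m < T, p (m + 1) ≤ p m + 1) (hq : ∀ m < T, q m ≤ q (m + 1))
    (hne : ∀ t ≤ T, p t ≠ q t) : ∀ t ≤ T, p t < q t := by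
  intro t
  induction t with
  | zero => exact fun _ => h0
  | succ t ih =>
    intro ht
    have := ih (by omega)
    have := hp t ht
    have := hq t ht
    have := hne (t + 1) ht
    omega

end NatSequences

section Swaps

variable {n : ℕ} {adj : Fin n → Fin n → Prop} {u : Fin n → Fin n → ℕ}

theorem SwapStep.utility_le_s8 {σ σ' : Assignment n} (h : SwapStep adj u σ σ') (c : Fin n) :
    u c (σ c) ≤ u c (σ' c) := by
  obtain ⟨a, b, -, hua, hub, rfl⟩ := h
  rw [Equiv.Perm.mul_apply]
  rcases eq_or_ne c a with rfl | hca
  · rw [Equiv.swap_apply_left]; exact hua.le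
  rcases eq_or_ne c b with rfl | hcb
  · rw [Equiv.swap_apply_right]; exact hub.le
  · rw [Equiv.swap_apply_of_ne_of_ne hca hcb]

variable {σs : ℕ → Assignment n} {T : ℕ}

theorem SwapSeq.utility_le_s8 (h : SwapSeq adj u σs T) (c : Fin n) {s s' : ℕ} (hss' : s ≤ s')
    (hs'T : s' ≤ T) : u c (σs s c) ≤ u c (σs s' c) := by
  induction s', hss' using Nat.le_induction with
  | base => exact le_rfl
  | succ m hm ih => exact (ih (by omega)).trans ((h m (by omega)).utility_le_s8 c)

theorem SwapSeq.apply_eq_of_apply_eq_s8 (h : SwapSeq adj u σs T) (hu : StrictPref u) (c : Fin n)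
    {t s t' : ℕ} (hts : t ≤ s) (hst' : s ≤ t') (ht'T : t' ≤ T) (heq : σs t c = σs t' c) :
    σs s c = σs t c := by
  apply hu c
  have h₁ := h.utility_le_s8 c hts (by omega)
  have h₂ := h.utility_le_s8 c hst' ht'T
  rw [← heq] at h₂
  omega

theorem SwapSeq.inv_apply_eq_of_inv_apply_eq (h : SwapSeq adj u σs T) (hu : StrictPref u)
    (o : Fin n) {t s t' : ℕ} (hts : t ≤ s) (hst' : s ≤ t') (ht'T : t' ≤ T)
    (heq : (σs t)⁻¹ o = (σs t')⁻¹ o) : (σs s)⁻¹ o = (σs t)⁻¹ o := by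
  set a := (σs t)⁻¹ o
  have hta : σs t a = o := Equiv.apply_symm_apply _ _
  have ht'a : σs t' a = o := by rw [heq]; exact Equiv.apply_symm_apply _ _
  rw [Equiv.Perm.inv_eq_iff_eq, h.apply_eq_of_apply_eq_s8 hu a hts hst' ht'T (hta.trans ht'a.symm),
    hta]

theorem SwapStep.val_inv_apply_le_add_one {σ σ' : Assignment n} (h : SwapStep pathAdj u σ σ')
    (o : Fin n) : (σ'⁻¹ o).val ≤ (σ⁻¹ o).val + 1 := by
  obtain ⟨a, b, hab, -, -, rfl⟩ := h
  rw [mul_inv_rev, Equiv.swap_inv, Equiv.Perm.mul_apply]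
  rcases eq_or_ne (σ⁻¹ o) a with ha | ha
  · rw [ha, Equiv.swap_apply_left]; rcases hab with hab | hab <;> omega
  rcases eq_or_ne (σ⁻¹ o) b with hb | hb
  · rw [hb, Equiv.swap_apply_right]; rcases hab with hab | hab <;> omega
  · rw [Equiv.swap_apply_of_ne_of_ne ha hb]; omega

theorem SwapSeq.val_inv_apply_le_succ (h : SwapSeq pathAdj u σs T) (hu : StrictPref u) (o : Fin n)
    (hend : ((σs 0)⁻¹ o).val ≤ ((σs T)⁻¹ o).val) :
    ∀ t < T, ((σs t)⁻¹ o).val ≤ ((σs (t + 1))⁻¹ o).val :=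
  le_succ_of_no_return (fun t => ((σs t)⁻¹ o).val) T
    (fun m hm => (h m hm).val_inv_apply_le_add_one o)
    (fun _ _ _ hts hst' ht'T heq =>
      congrArg Fin.val (h.inv_apply_eq_of_inv_apply_eq hu o hts hst' ht'T (Fin.val_injective heq)))
    hend

end Swaps

/-- All indices are 0-based: the paper's `o_1` is object `0`. -/
theorem end_object_index_ge {n : ℕ} (hn : 0 < n)
    (u : Fin n → Fin n → ℕ) (hu : StrictPref u)
    (k : Fin n)
    (σ : Assignment n) (hreach : ReachableAssign pathAdj u σ)
    (h1 : σ k = ⟨0, hn⟩) :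
    k.val ≤ (σ ⟨k.val - 1, by omega⟩).val := by
  obtain ⟨T, σs, h0, hseq, rfl⟩ := hreach
  by_contra! hlt
  set o : Fin n := ⟨0, hn⟩
  set y := σs T ⟨k.val - 1, by omega⟩
  have hy : y ≠ o := by
    intro hyo
    have := Fin.ext_iff.mp ((σs T).injective (hyo.trans h1.symm))
    simp only at this
    omega
  have hy0 : 0 < y.val := Nat.pos_of_ne_zero fun h => hy (Fin.ext h)
  have hinit : ∀ x, (σs 0)⁻¹ x = x := by simp [h0]
  have hoT : (σs T)⁻¹ o = k := by rw [Equiv.Perm.inv_eq_iff_eq, h1]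
  have hyT : (σs T)⁻¹ y = ⟨k.val - 1, by omega⟩ := Equiv.symm_apply_apply _ _
  have hyr := hseq.val_inv_apply_le_succ hu y (by rw [hinit, hyT]; simp only; omega)
  have hleft := lt_of_forall_ne_of_le_succ (fun t => ((σs t)⁻¹ o).val)
    (fun t => ((σs t)⁻¹ y).val) T (by simp only [hinit]; exact hy0)
    (fun m hm => (hseq m hm).val_inv_apply_le_add_one o) hyr
    (fun t _ heq => hy ((σs t)⁻¹.injective (Fin.val_injective heq)).symm) T le_rfl
  simp only [hoT, hyT] at hleft
  omega
end
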